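/- For every integer n ≥ 1 and every candidate set C ⊆ S, LB_{2n−1}(C) ≤ LB_{2n}(C) ≤ MinTotal(C). -/

import Mathlib

/-!
Formalization of guessing games (Wordle-style), following the paper's definitions:
guesses `G`, secrets `S ⊆ G`, responses `R` with `|R| > 1`, affirmative response
`r* ∈ R`, and an answering function `a` with `a(g,s) = r* ↔ g = s`.
-/

structure GuessingGame (α ρ : Type*) [DecidableEq α] [DecidableEq ρ] where
  G : Finset α
  S : Finset α
  R : Finset ρ
  rstar : ρ
  ans : α → α → ρ
  S_subset_G : S ⊆ G
  one_lt_card_R : 1 < R.card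
  rstar_mem : rstar ∈ R
  ans_mem : ∀ g ∈ G, ∀ s ∈ S, ans g s ∈ R
  ans_eq_rstar_iff : ∀ g ∈ G, ∀ s ∈ S, (ans g s = rstar ↔ g = s)

namespace GuessingGame

variable {α ρ : Type*} [DecidableEq α] [DecidableEq ρ] (gm : GuessingGame α ρ)

/-- The split `C_{g,r} = {c ∈ C : a(g,c) = r}`. -/
def split (C : Finset α) (g : α) (r : ρ) : Finset α :=
  C.filter fun c => gm.ans g c = r

/-- `nSplits(g,C) = |{r ∈ R : C_{g,r} ≠ ∅}|`. -/
def nSplits (g : α) (C : Finset α) : ℕ :=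
  (gm.R.filter fun r => (gm.split C g r).Nonempty).card

/-- The useful guesses `UG(C)`: for `|C| > 1` the guesses `g ∈ G` with
`nSplits(g,C) ≠ 1`; for `|C| ≤ 1`, `UG(C) = C`. -/
def UG (C : Finset α) : Finset α :=
  if 1 < C.card then gm.G.filter fun g => gm.nSplits g C ≠ 1 else C

/-- `MaxSplits(C) = max_{g ∈ G} nSplits(g,C)`. -/
def MaxSplits (C : Finset α) : ℕ :=
  gm.G.sup fun g => gm.nSplits g C

end GuessingGame

/-- `Bound(n,b)`: `Bound(0,b) = 0`, `Bound(n,1) = n(n+1)/2`, and for `n > 0`, `b > 1`,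
`Bound(n,b) = Σ_{i=1}^{k} i·b^{i-1} + (k+1)·(n - (b^k - 1)/(b-1))` where
`k = ⌊log_b (n(b-1)+1)⌋`. -/
def Bound (n b : ℕ) : ℕ :=
  if n = 0 then 0
  else if b = 1 then n * (n + 1) / 2
  else
    (∑ i ∈ Finset.range (Nat.log b (n * (b - 1) + 1)), (i + 1) * b ^ i) +
      (Nat.log b (n * (b - 1) + 1) + 1) *
        (n - (b ^ Nat.log b (n * (b - 1) + 1) - 1) / (b - 1))

namespace GuessingGame

variable {α ρ : Type*} [DecidableEq α] [DecidableEq ρ] (gm : GuessingGame α ρ)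

/-- Fuel-based implementation of the well-founded recursion defining `MinTotal`:
`MinTotal(∅) = 0` and for nonempty `C`,
`MinTotal(C) = min_{g ∈ UG(C)} (|C| + Σ_{r ∈ R \ {r*}} MinTotal(C_{g,r}))`.
Fuel `|C|` suffices since for a useful guess every split is a proper subset of `C`. -/
noncomputable def MinTotalAux : ℕ → Finset α → ℕ
  | 0, _ => 0
  | n + 1, C =>
    if C = ∅ then 0
    else
      sInf (↑((gm.UG C).image fun g =>
        C.card + ∑ r ∈ gm.R.erase gm.rstar, MinTotalAux n (gm.split C g r)) : Set ℕ)

/-- `MinTotal(C)`. -/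
noncomputable def MinTotal (C : Finset α) : ℕ :=
  gm.MinTotalAux C.card C

/-- `V*(g,C) = |C| + Σ_{r ∈ R \ {r*}} MinTotal(C_{g,r})`. -/
noncomputable def Vstar (g : α) (C : Finset α) : ℕ :=
  C.card + ∑ r ∈ gm.R.erase gm.rstar, gm.MinTotal (gm.split C g r)

/-- The lower bounds `LB_i` (`i ≥ 1`; `LB 0` is junk):
`LB_1(C) = Bound(|C|, MaxSplits(S))`, `LB_2(C) = Bound(|C|, MaxSplits(C))`, and for
`i ≥ 1`, `LB_{i+2}(∅) = 0` and `LB_{i+2}(C) = min_{g ∈ UG(C)} V_i(g,C)` for nonempty `C`,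
where `V_i(g,C) = |C| + Σ_{r ∈ R \ {r*}} LB_i(C_{g,r})`. -/
noncomputable def LB : ℕ → Finset α → ℕ
  | 0, _ => 0
  | 1, C => Bound C.card (gm.MaxSplits gm.S)
  | 2, C => Bound C.card (gm.MaxSplits C)
  | n + 3, C =>
    if C = ∅ then 0
    else
      sInf (↑((gm.UG C).image fun g =>
        C.card + ∑ r ∈ gm.R.erase gm.rstar, LB (n + 1) (gm.split C g r)) : Set ℕ)

/-- `V_i(g,C) = |C| + Σ_{r ∈ R \ {r*}} LB_i(C_{g,r})`. -/
noncomputable def V (i : ℕ) (g : α) (C : Finset α) : ℕ :=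
  C.card + ∑ r ∈ gm.R.erase gm.rstar, gm.LB i (gm.split C g r)

end GuessingGame

/-!
For `b ≥ 1` let `S_k = ∑ i ∈ range k, b ^ i` be the number of nodes on the first `k` levels of
the complete `b`-ary tree. `Bound n b` is the total depth of the first `n` nodes, which by
layer-cake summation is `∑ k, (n - S_k)` (truncated subtraction is exactly the positive part).
Since `S_(k+1) = b * S_k + 1`, if `n ≤ 1 + ∑ r, n_r` with at most `b` of the `n_r` nonzero, then
`n - S_(k+1) ≤ ∑ r, (n_r - S_k)` for every `k`, hence `Bound n b ≤ n + ∑ r, Bound n_r b`.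

For a guess, the split at `r*` has at most one element and at most `MaxSplits C` splits are
nonempty, so applying this to an optimal first guess gives `LB_2 ≤ MinTotal` by strong induction
on `C`; `Bound` is antitone in `b` and `MaxSplits` is monotone in `C`, so `LB_1 ≤ LB_2`. Finally
`LB_(i+2)` arises from `LB_i` by the same monotone recursion that `MinTotal` satisfies, so both
inequalities pass from `i` to `i + 2`.
-/

open Finset

lemma sum_range_succ_tsub_geom_sum {b n K : ℕ} (h : ∑ i ∈ range K, b ^ i ≤ n) :
    ∑ k ∈ range (K + 1), (n - ∑ i ∈ range k, b ^ i) =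
      ∑ i ∈ range K, (i + 1) * b ^ i + (K + 1) * (n - ∑ i ∈ range K, b ^ i) := by
  induction K with
  | zero => simp
  | succ K ih =>
    rw [geom_sum_succ'] at h
    have hK : n - ∑ i ∈ range K, b ^ i = b ^ K + (n - ∑ i ∈ range (K + 1), b ^ i) := by
      rw [geom_sum_succ']; omega
    rw [sum_range_succ, ih (by omega), sum_range_succ (fun i => (i + 1) * b ^ i), hK]
    ring

lemma sum_range_tsub_geom_sum_le {b m N : ℕ} (N' : ℕ) (h : m ≤ ∑ i ∈ range N, b ^ i) :
    ∑ k ∈ range N', (m - ∑ i ∈ range k, b ^ i) ≤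
      ∑ k ∈ range N, (m - ∑ i ∈ range k, b ^ i) := by
  refine sum_le_sum_of_ne_zero fun k _ hk => mem_range.2 ?_
  by_contra! hNk
  have := sum_le_sum_of_subset (f := (b ^ ·)) (range_subset_range.2 hNk)
  omega

lemma self_le_geom_sum {b : ℕ} (hb : 1 ≤ b) (k : ℕ) : k ≤ ∑ i ∈ range k, b ^ i :=
  calc k = ∑ _i ∈ range k, 1 := by simp
    _ ≤ ∑ i ∈ range k, b ^ i := sum_le_sum fun i _ => Nat.one_le_pow _ _ hb

lemma bound_zero (b : ℕ) : Bound 0 b = 0 := by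
  simp [Bound]

lemma bound_eq_sum_range_tsub {b n N : ℕ} (hb : 1 ≤ b) (hN : n ≤ ∑ i ∈ range N, b ^ i) :
    Bound n b = ∑ k ∈ range N, (n - ∑ i ∈ range k, b ^ i) := by
  suffices ∃ N₀, n ≤ ∑ i ∈ range N₀, b ^ i ∧
      Bound n b = ∑ k ∈ range N₀, (n - ∑ i ∈ range k, b ^ i) by
    obtain ⟨N₀, hN₀, h⟩ := this
    exact h.trans <|
      le_antisymm (sum_range_tsub_geom_sum_le _ hN) (sum_range_tsub_geom_sum_le _ hN₀)
  rcases Nat.eq_zero_or_pos n with rfl | hn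
  · exact ⟨0, le_rfl, bound_zero b⟩
  rcases hb.eq_or_lt with rfl | hb
  · refine ⟨n + 1, by simp, ?_⟩
    have hreflect : ∑ k ∈ range (n + 1), (n - k) = ∑ k ∈ range (n + 1), k := by
      simpa using sum_range_reflect id (n + 1)
    simp only [one_pow, sum_const, card_range, smul_eq_mul, mul_one, Bound, if_neg hn.ne',
      if_true, hreflect, sum_range_id, Nat.add_sub_cancel, mul_comm]
  obtain ⟨c, rfl⟩ : ∃ c, b = c + 1 := ⟨b - 1, by omega⟩
  rw [Bound, if_neg hn.ne', if_neg (by omega), Nat.add_sub_cancel]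
  set K := Nat.log (c + 1) (n * c + 1)
  have hgeom := geom_sum_mul_add c
  have hlow : (c + 1) ^ K ≤ n * c + 1 := Nat.pow_log_le_self _ (by omega)
  have hhigh : n * c + 1 < (c + 1) ^ (K + 1) := Nat.lt_pow_succ_log_self hb _
  rw [← hgeom] at hlow hhigh
  have hK : ∑ i ∈ range K, (c + 1) ^ i ≤ n :=
    Nat.le_of_mul_le_mul_right
      (show (∑ i ∈ range K, (c + 1) ^ i) * c ≤ n * c by omega) (by omega)
  refine ⟨K + 1, (Nat.lt_of_mul_lt_mul_right
    (show n * c < (∑ i ∈ range (K + 1), (c + 1) ^ i) * c by omega)).le, ?_⟩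
  rw [sum_range_succ_tsub_geom_sum hK, ← hgeom K, Nat.add_sub_cancel,
    Nat.mul_div_cancel _ (by omega)]

lemma bound_le_bound_of_le {b b' : ℕ} (hb : 1 ≤ b) (h : b ≤ b') (n : ℕ) :
    Bound n b' ≤ Bound n b := by
  rw [bound_eq_sum_range_tsub hb (self_le_geom_sum hb n),
    bound_eq_sum_range_tsub (hb.trans h) (self_le_geom_sum (hb.trans h) n)]
  gcongr

lemma sum_le_sum_tsub_add_card_mul {ι : Type*} (s : Finset ι) (a : ι → ℕ) (c : ℕ) :
    ∑ i ∈ s, a i ≤ ∑ i ∈ s, (a i - c) + #{i ∈ s | a i ≠ 0} * c :=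
  calc ∑ i ∈ s, a i = ∑ i ∈ s with a i ≠ 0, a i := (sum_filter_ne_zero s).symm
    _ ≤ ∑ i ∈ s with a i ≠ 0, (a i - c + c) := sum_le_sum fun i _ => le_tsub_add
    _ = ∑ i ∈ s with a i ≠ 0, (a i - c) + #{i ∈ s | a i ≠ 0} * c := by
      rw [sum_add_distrib, sum_const, smul_eq_mul]
    _ ≤ ∑ i ∈ s, (a i - c) + #{i ∈ s | a i ≠ 0} * c := by
      gcongr
      exact filter_subset _ _

lemma bound_le_add_sum_bound {ι : Type*} {b n : ℕ} (s : Finset ι) (a : ι → ℕ) (hb : 1 ≤ b)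
    (hn : n ≤ ∑ i ∈ s, a i + 1) (hs : #{i ∈ s | a i ≠ 0} ≤ b) :
    Bound n b ≤ n + ∑ i ∈ s, Bound (a i) b := by
  have hlevel (k : ℕ) :
      n - ∑ j ∈ range (k + 1), b ^ j ≤ ∑ i ∈ s, (a i - ∑ j ∈ range k, b ^ j) := by
    have := sum_le_sum_tsub_add_card_mul s a (∑ j ∈ range k, b ^ j)
    have := Nat.mul_le_mul_right (∑ j ∈ range k, b ^ j) hs
    rw [geom_sum_succ]
    omega
  have hlevels (m : ℕ) : ∑ k ∈ range n, (m - ∑ j ∈ range k, b ^ j) ≤ Bound m b := by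
    rw [bound_eq_sum_range_tsub hb (self_le_geom_sum hb m)]
    exact sum_range_tsub_geom_sum_le _ (self_le_geom_sum hb m)
  calc Bound n b = ∑ k ∈ range (n + 1), (n - ∑ j ∈ range k, b ^ j) :=
        bound_eq_sum_range_tsub hb ((n.le_succ).trans (self_le_geom_sum hb _))
    _ = n + ∑ k ∈ range n, (n - ∑ j ∈ range (k + 1), b ^ j) := by
      rw [sum_range_succ', add_comm]; simp
    _ ≤ n + ∑ k ∈ range n, ∑ i ∈ s, (a i - ∑ j ∈ range k, b ^ j) := by
      gcongr with k
      exact hlevel k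
    _ = n + ∑ i ∈ s, ∑ k ∈ range n, (a i - ∑ j ∈ range k, b ^ j) := by rw [sum_comm]
    _ ≤ n + ∑ i ∈ s, Bound (a i) b := by gcongr with i; exact hlevels (a i)

lemma sInf_coe_image_le {β : Type*} {s : Finset β} {f : β → ℕ} {x : β} (hx : x ∈ s) :
    sInf (↑(s.image f) : Set ℕ) ≤ f x :=
  Nat.sInf_le (mem_coe.2 (mem_image_of_mem f hx))

lemma exists_mem_sInf_coe_image_eq {β : Type*} {s : Finset β} (hs : s.Nonempty) (f : β → ℕ) :
    ∃ x ∈ s, sInf (↑(s.image f) : Set ℕ) = f x := by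
  obtain ⟨x, hx, h⟩ := mem_image.1 (Nat.sInf_mem (hs.image f).to_set)
  exact ⟨x, hx, h.symm⟩

lemma sInf_coe_image_mono {β : Type*} {s : Finset β} (hs : s.Nonempty) {f₁ f₂ : β → ℕ}
    (h : ∀ x ∈ s, f₁ x ≤ f₂ x) :
    sInf (↑(s.image f₁) : Set ℕ) ≤ sInf (↑(s.image f₂) : Set ℕ) := by
  obtain ⟨x, hx, hmin⟩ := exists_mem_sInf_coe_image_eq hs f₂
  exact hmin ▸ (sInf_coe_image_le hx).trans (h x hx)

namespace GuessingGame

variable {α ρ : Type*} [DecidableEq α] [DecidableEq ρ] (gm : GuessingGame α ρ)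
  {C C' : Finset α} {g : α} {r : ρ}

lemma split_subset : gm.split C g r ⊆ C :=
  filter_subset _ _

lemma mem_split {c : α} : c ∈ gm.split C g r ↔ c ∈ C ∧ gm.ans g c = r :=
  mem_filter

lemma ans_self {c : α} (hc : c ∈ gm.S) : gm.ans c c = gm.rstar :=
  (gm.ans_eq_rstar_iff c (gm.S_subset_G hc) c hc).2 rfl

lemma nSplits_mono (h : C ⊆ C') : gm.nSplits g C ≤ gm.nSplits g C' :=
  card_le_card fun r hr => by
    rw [mem_filter] at hr ⊢
    exact ⟨hr.1, hr.2.mono (filter_subset_filter _ h)⟩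

lemma nSplits_le_maxSplits (hg : g ∈ gm.G) : gm.nSplits g C ≤ gm.MaxSplits C :=
  le_sup (f := fun g => gm.nSplits g C) hg

lemma maxSplits_mono (h : C ⊆ C') : gm.MaxSplits C ≤ gm.MaxSplits C' :=
  Finset.sup_le fun _ hg => (gm.nSplits_mono h).trans (gm.nSplits_le_maxSplits hg)

lemma one_le_nSplits (hCS : C ⊆ gm.S) (hC : C.Nonempty) (hg : g ∈ gm.G) :
    1 ≤ gm.nSplits g C := by
  obtain ⟨c, hc⟩ := hC
  exact card_pos.2 ⟨gm.ans g c,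
    mem_filter.2 ⟨gm.ans_mem g hg c (hCS hc), c, gm.mem_split.2 ⟨hc, rfl⟩⟩⟩

lemma one_le_maxSplits (hCS : C ⊆ gm.S) (hC : C.Nonempty) : 1 ≤ gm.MaxSplits C := by
  obtain ⟨c, hc⟩ := hC
  have hcG : c ∈ gm.G := gm.S_subset_G (hCS hc)
  exact (gm.one_le_nSplits hCS ⟨c, hc⟩ hcG).trans (gm.nSplits_le_maxSplits hcG)

lemma two_le_nSplits (hCS : C ⊆ gm.S) {c c' : α} (hc : c ∈ C) (hc' : c' ∈ C)
    (hne : c ≠ c') : 2 ≤ gm.nSplits c C := by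
  have hcG : c ∈ gm.G := gm.S_subset_G (hCS hc)
  have hcc' : gm.ans c c' ≠ gm.rstar :=
    fun h => hne ((gm.ans_eq_rstar_iff c hcG c' (hCS hc')).1 h)
  refine one_lt_card.2 ⟨gm.rstar, ?_, gm.ans c c', ?_, fun h => hcc' h.symm⟩
  · exact mem_filter.2 ⟨gm.rstar_mem, c, gm.mem_split.2 ⟨hc, gm.ans_self (hCS hc)⟩⟩
  · exact mem_filter.2 ⟨gm.ans_mem c hcG c' (hCS hc'), c', gm.mem_split.2 ⟨hc', rfl⟩⟩

lemma nSplits_le_one_of_split_eq_self (h : gm.split C g r = C) : gm.nSplits g C ≤ 1 := by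
  refine card_le_one.2 fun r₁ hr₁ r₂ hr₂ => ?_
  have hr : ∀ r' ∈ gm.R.filter fun r' => (gm.split C g r').Nonempty, r' = r := by
    intro r' hr'
    obtain ⟨c, hc⟩ := (mem_filter.1 hr').2
    have hcr : c ∈ gm.split C g r := h.symm ▸ (gm.mem_split.1 hc).1
    exact (gm.mem_split.1 hc).2.symm.trans (gm.mem_split.1 hcr).2
  rw [hr r₁ hr₁, hr r₂ hr₂]

lemma card_split_rstar_le_one (hCS : C ⊆ gm.S) (hg : g ∈ gm.G) :
    #(gm.split C g gm.rstar) ≤ 1 :=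
  card_le_one.2 fun c hc c' hc' => by
    rw [gm.mem_split] at hc hc'
    rw [← (gm.ans_eq_rstar_iff g hg c (hCS hc.1)).1 hc.2,
      ← (gm.ans_eq_rstar_iff g hg c' (hCS hc'.1)).1 hc'.2]

lemma card_le_sum_card_split_add_one (hCS : C ⊆ gm.S) (hg : g ∈ gm.G) :
    #C ≤ ∑ r ∈ gm.R.erase gm.rstar, #(gm.split C g r) + 1 := by
  have hfiber : #C = ∑ r ∈ gm.R, #(gm.split C g r) :=
    card_eq_sum_card_fiberwise fun c hc => gm.ans_mem g hg c (hCS hc)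
  rw [hfiber, ← sum_erase_add _ _ gm.rstar_mem]
  exact Nat.add_le_add_left (gm.card_split_rstar_le_one hCS hg) _

lemma card_filter_split_ne_zero_le_nSplits :
    #{r ∈ gm.R.erase gm.rstar | #(gm.split C g r) ≠ 0} ≤ gm.nSplits g C :=
  card_le_card fun r hr => by
    rw [mem_filter, card_ne_zero] at hr
    exact mem_filter.2 ⟨mem_of_mem_erase hr.1, hr.2⟩

lemma bound_card_le_add_sum {b : ℕ} (hCS : C ⊆ gm.S) (hg : g ∈ gm.G) (hb : 1 ≤ b)
    (hgb : gm.nSplits g C ≤ b) :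
    Bound #C b ≤ #C + ∑ r ∈ gm.R.erase gm.rstar, Bound #(gm.split C g r) b :=
  bound_le_add_sum_bound _ _ hb (gm.card_le_sum_card_split_add_one hCS hg)
    (gm.card_filter_split_ne_zero_le_nSplits.trans hgb)

lemma bound_card_maxSplits_le_of_subset (h : C ⊆ C') (hC' : C' ⊆ gm.S) :
    Bound #C (gm.MaxSplits C') ≤ Bound #C (gm.MaxSplits C) := by
  rcases C.eq_empty_or_nonempty with rfl | hC
  · simp [bound_zero]
  exact bound_le_bound_of_le (gm.one_le_maxSplits (h.trans hC') hC) (gm.maxSplits_mono h) _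

lemma ug_subset_G (hCS : C ⊆ gm.S) : gm.UG C ⊆ gm.G := by
  unfold UG
  split_ifs
  · exact filter_subset _ _
  · exact hCS.trans gm.S_subset_G

lemma ug_nonempty (hCS : C ⊆ gm.S) (hC : C.Nonempty) : (gm.UG C).Nonempty := by
  unfold UG
  split_ifs with h
  · obtain ⟨c, hc, c', hc', hne⟩ := one_lt_card.1 h
    have := gm.two_le_nSplits hCS hc hc' hne
    exact ⟨c, mem_filter.2 ⟨gm.S_subset_G (hCS hc), by omega⟩⟩
  · exact hC

lemma split_ssubset (hCS : C ⊆ gm.S) (hC : C.Nonempty) (hg : g ∈ gm.UG C)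
    (hr : r ≠ gm.rstar) : gm.split C g r ⊂ C := by
  refine gm.split_subset.ssubset_of_ne fun h => ?_
  unfold UG at hg
  split_ifs at hg
  · obtain ⟨hgG, hg1⟩ := mem_filter.1 hg
    have := gm.one_le_nSplits hCS hC hgG
    have := gm.nSplits_le_one_of_split_eq_self h
    omega
  · have hgr : gm.ans g g = r := (gm.mem_split.1 (h.symm ▸ hg)).2
    exact hr (hgr.symm.trans (gm.ans_self (hCS hg)))

lemma minTotalAux_congr {f f' : ℕ} (hCS : C ⊆ gm.S) (hf : #C ≤ f) (hf' : #C ≤ f') :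
    gm.MinTotalAux f C = gm.MinTotalAux f' C := by
  induction f generalizing C f' with
  | zero => rw [card_eq_zero.1 (Nat.le_zero.1 hf)]; cases f' <;> simp [MinTotalAux]
  | succ f ih =>
    rcases C.eq_empty_or_nonempty with rfl | hC
    · cases f' <;> simp [MinTotalAux]
    obtain ⟨f', rfl⟩ : ∃ f'', f' = f'' + 1 := ⟨f' - 1, by have := hC.card_pos; omega⟩
    rw [MinTotalAux, MinTotalAux]
    congr 3
    refine image_congr fun g hg => ?_
    congr 1
    refine sum_congr rfl fun r hr => ?_
    have hlt := card_lt_card (gm.split_ssubset hCS hC hg (ne_of_mem_erase hr))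
    exact ih (gm.split_subset.trans hCS) (by omega) (by omega)

lemma minTotal_eq_sInf (hCS : C ⊆ gm.S) (hC : C.Nonempty) :
    gm.MinTotal C = sInf (↑((gm.UG C).image (gm.Vstar · C)) : Set ℕ) := by
  obtain ⟨c, hc⟩ : ∃ c, #C = c + 1 := ⟨#C - 1, by have := hC.card_pos; omega⟩
  rw [MinTotal, hc, MinTotalAux, if_neg hC.ne_empty]
  congr 2
  refine image_congr fun g hg => ?_
  simp only [Vstar, hc]
  congr 1
  refine sum_congr rfl fun r hr => ?_
  have hlt := card_lt_card (gm.split_ssubset hCS hC hg (ne_of_mem_erase hr))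
  exact gm.minTotalAux_congr (gm.split_subset.trans hCS) (by omega) le_rfl

lemma exists_minTotal_eq_vstar (hCS : C ⊆ gm.S) (hC : C.Nonempty) :
    ∃ g ∈ gm.UG C, gm.MinTotal C = gm.Vstar g C :=
  gm.minTotal_eq_sInf hCS hC ▸ exists_mem_sInf_coe_image_eq (gm.ug_nonempty hCS hC) _

lemma lb_add_three_empty (i : ℕ) : gm.LB (i + 3) ∅ = 0 := by
  rw [LB, if_pos rfl]

lemma lb_add_three (i : ℕ) (hC : C.Nonempty) :
    gm.LB (i + 3) C = sInf (↑((gm.UG C).image (gm.V (i + 1) · C)) : Set ℕ) := by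
  rw [LB, if_neg hC.ne_empty]
  rfl

lemma lb_one_le_lb_two (hCS : C ⊆ gm.S) : gm.LB 1 C ≤ gm.LB 2 C :=
  gm.bound_card_maxSplits_le_of_subset hCS subset_rfl

lemma lb_two_le_minTotal (hCS : C ⊆ gm.S) : gm.LB 2 C ≤ gm.MinTotal C := by
  induction C using Finset.strongInduction with
  | H C ih =>
    rcases C.eq_empty_or_nonempty with rfl | hC
    · simp [LB, bound_zero]
    obtain ⟨g, hg, hmin⟩ := gm.exists_minTotal_eq_vstar hCS hC
    have hgG : g ∈ gm.G := gm.ug_subset_G hCS hg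
    rw [hmin, LB, Vstar]
    calc Bound #C (gm.MaxSplits C)
        ≤ #C + ∑ r ∈ gm.R.erase gm.rstar, Bound #(gm.split C g r) (gm.MaxSplits C) :=
          gm.bound_card_le_add_sum hCS hgG (gm.one_le_maxSplits hCS hC)
            (gm.nSplits_le_maxSplits hgG)
      _ ≤ #C + ∑ r ∈ gm.R.erase gm.rstar, gm.MinTotal (gm.split C g r) := by
          gcongr with r hr
          calc Bound #(gm.split C g r) (gm.MaxSplits C)
              ≤ Bound #(gm.split C g r) (gm.MaxSplits (gm.split C g r)) :=
                gm.bound_card_maxSplits_le_of_subset gm.split_subset hCS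
            _ ≤ gm.MinTotal (gm.split C g r) :=
                ih _ (gm.split_ssubset hCS hC hg (ne_of_mem_erase hr))
                  (gm.split_subset.trans hCS)

lemma lb_add_three_le_lb_add_three {i j : ℕ}
    (h : ∀ C ⊆ gm.S, gm.LB (i + 1) C ≤ gm.LB (j + 1) C) (hCS : C ⊆ gm.S) :
    gm.LB (i + 3) C ≤ gm.LB (j + 3) C := by
  rcases C.eq_empty_or_nonempty with rfl | hC
  · exact (lb_add_three_empty _ _).trans_le (Nat.zero_le _)
  rw [lb_add_three _ _ hC, lb_add_three _ _ hC]
  refine sInf_coe_image_mono (gm.ug_nonempty hCS hC) fun g _ => ?_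
  unfold V
  gcongr with r
  exact h _ (gm.split_subset.trans hCS)

lemma lb_add_three_le_minTotal {i : ℕ} (h : ∀ C ⊆ gm.S, gm.LB (i + 1) C ≤ gm.MinTotal C)
    (hCS : C ⊆ gm.S) : gm.LB (i + 3) C ≤ gm.MinTotal C := by
  rcases C.eq_empty_or_nonempty with rfl | hC
  · exact (lb_add_three_empty _ _).trans_le (Nat.zero_le _)
  rw [lb_add_three _ _ hC, minTotal_eq_sInf _ hCS hC]
  refine sInf_coe_image_mono (gm.ug_nonempty hCS hC) fun g _ => ?_
  unfold V Vstar
  gcongr with r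
  exact h _ (gm.split_subset.trans hCS)

lemma lb_odd_le_lb_even_le_minTotal (m : ℕ) :
    ∀ C ⊆ gm.S,
      gm.LB (2 * m + 1) C ≤ gm.LB (2 * m + 2) C ∧ gm.LB (2 * m + 2) C ≤ gm.MinTotal C := by
  induction m with
  | zero => exact fun C hCS => ⟨gm.lb_one_le_lb_two hCS, gm.lb_two_le_minTotal hCS⟩
  | succ m ih =>
    exact fun C hCS => ⟨gm.lb_add_three_le_lb_add_three (fun C hCS => (ih C hCS).1) hCS,
      gm.lb_add_three_le_minTotal (fun C hCS => (ih C hCS).2) hCS⟩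

end GuessingGame

section Statements

open GuessingGame

variable {α ρ : Type*} [DecidableEq α] [DecidableEq ρ]

theorem statement_12_general (gm : GuessingGame α ρ) (n : ℕ)
    (C : Finset α) (hCS : C ⊆ gm.S) :
    gm.LB (2 * n - 1) C ≤ gm.LB (2 * n) C ∧ gm.LB (2 * n) C ≤ gm.MinTotal C := by
  cases n with
  | zero => simp [LB]
  | succ m => exact gm.lb_odd_le_lb_even_le_minTotal m C hCS

theorem statement_12 (gm : GuessingGame α ρ) (n : ℕ) (hn : 1 ≤ n)
    (C : Finset α) (hCS : C ⊆ gm.S) :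
    gm.LB (2 * n - 1) C ≤ gm.LB (2 * n) C ∧ gm.LB (2 * n) C ≤ gm.MinTotal C :=
  statement_12_general gm n C hCS

end Statements
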